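/- Let G₁,…,G_m be real Hilbert spaces, let w₁,…,w_m ∈ (0,1) satisfy Σ_{i=1}^m w_i = 1, and let h_i ∈ Γ₀(G_i) for each i. Define h on the product G = G₁×⋯×G_m by h(y) = Σ_{i=1}^m h_i(y_i), and let h* denote its Fenchel conjugate with respect to the weighted inner product ⟨·,·⟩_{1,G}. Then for every λ > 0 and every y = (y₁,…,y_m) ∈ G, the proximity operator of λh* computed with respect to the weighted norm ‖·‖_{1,G} satisfies prox_{λh*}(y) = ((1/w₁)·prox_{w₁λ h₁*}(w₁y₁), …, (1/w_m)·prox_{w_mλ h_m*}(w_m y_m)), where each prox_{w_iλ h_i*} is computed with respect to the norm of G_i and h_i* is the standard Fenchel conjugate of h_i on G_i. -/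

import Mathlib

open scoped InnerProductSpace BigOperators

/-- `Γ₀(K)`: proper, lower semicontinuous, convex function from `K` to `(-∞, +∞]`. -/
def Gamma0 {K : Type*} [NormedAddCommGroup K] [InnerProductSpace ℝ K]
    (φ : K → EReal) : Prop :=
  (∃ x, φ x ≠ ⊤) ∧ (∀ x, φ x ≠ ⊥) ∧ LowerSemicontinuous φ ∧
    ∀ x y : K, ∀ a b : ℝ, 0 ≤ a → 0 ≤ b → a + b = 1 →
      φ (a • x + b • y) ≤ (a : EReal) * φ x + (b : EReal) * φ y

/-- `IsProx μ φ u p` : `p` is the proximity point `prox_{μφ}(u)`, i.e. `p` minimizes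
`x ↦ (1/2)‖x - u‖² + μ φ(x)` over `K`. -/
def IsProx {K : Type*} [NormedAddCommGroup K] [InnerProductSpace ℝ K]
    (μ : ℝ) (φ : K → EReal) (u p : K) : Prop :=
  ∀ x : K, (((1 / 2 : ℝ) * ‖p - u‖ ^ 2 : ℝ) : EReal) + (μ : EReal) * φ p ≤
    (((1 / 2 : ℝ) * ‖x - u‖ ^ 2 : ℝ) : EReal) + (μ : EReal) * φ x

/-- The standard Fenchel conjugate `φ*(y) = sup_x (⟨x,y⟩ - φ(x))` on a real Hilbert space. -/
noncomputable def fconj {K : Type*} [NormedAddCommGroup K] [InnerProductSpace ℝ K]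
    (φ : K → EReal) (y : K) : EReal :=
  ⨆ x : K, ((⟪x, y⟫_ℝ : ℝ) : EReal) - φ x

/-!
Since `∑ wᵢ ⟪zᵢ, uᵢ⟫ = ∑ ⟪zᵢ, wᵢ • uᵢ⟫`, the weighted conjugate separates:
`h*(u) = ∑ hᵢ*(wᵢ uᵢ)`. The weighted prox objective at `x` is then the sum over `i` of
`(wᵢ/2)‖xᵢ - yᵢ‖² + λ hᵢ*(wᵢ xᵢ)`, which is `wᵢ⁻¹` times the objective of
`prox_{wᵢλ hᵢ*}(wᵢ yᵢ)` at `wᵢ xᵢ`; hence each summand is minimised at `xᵢ = wᵢ⁻¹ qᵢ`.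
-/

namespace EReal

@[simp, norm_cast]
lemma coe_finset_sum {ι : Type*} (s : Finset ι) (f : ι → ℝ) :
    ((∑ i ∈ s, f i : ℝ) : EReal) = ∑ i ∈ s, (f i : EReal) :=
  map_sum (⟨⟨Real.toEReal, coe_zero⟩, coe_add⟩ : ℝ →+ EReal) f s

lemma coe_mul_finset_sum {ι : Type*} {c : ℝ} (hc : 0 ≤ c) (s : Finset ι) (f : ι → EReal) :
    (c : EReal) * ∑ i ∈ s, f i = ∑ i ∈ s, (c : EReal) * f i :=
  map_sum (⟨⟨((c : EReal) * ·), mul_zero _⟩,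
    left_distrib_of_nonneg_of_ne_top (EReal.coe_nonneg.mpr hc) (coe_ne_top c)⟩ : EReal →+ EReal) f s

lemma finset_sum_sub_finset_sum {ι : Type*} (s : Finset ι) (f g : ι → EReal)
    (hg : ∀ i ∈ s, g i ≠ ⊥) : ∑ i ∈ s, f i - ∑ i ∈ s, g i = ∑ i ∈ s, (f i - g i) := by
  classical
  induction s using Finset.induction with
  | empty => simp
  | insert a s ha ih =>
    have hsum : ∑ i ∈ s, g i ≠ ⊥ :=
      Finset.sum_induction g (· ≠ ⊥) (fun _ _ hx hy => add_ne_bot_iff.mpr ⟨hx, hy⟩)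
        zero_ne_bot fun i hi => hg i (Finset.mem_insert_of_mem hi)
    rw [Finset.sum_insert ha, Finset.sum_insert ha, Finset.sum_insert ha,
      add_sub_add_comm (.inl (hg a (Finset.mem_insert_self a s))) (.inr hsum),
      ih fun i hi => hg i (Finset.mem_insert_of_mem hi)]

lemma iSup_add_iSup_le {α β : Sort*} {f : α → EReal} {g : β → EReal} {c : EReal}
    (h : ∀ i j, f i + g j ≤ c) : iSup f + iSup g ≤ c :=
  add_le_of_forall_lt fun a ha b hb => by
    obtain ⟨i, hi⟩ := lt_iSup_iff.mp ha
    obtain ⟨j, hj⟩ := lt_iSup_iff.mp hb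
    exact (add_le_add hi.le hj.le).trans (h i j)

lemma iSup_pi_finset_sum {ι : Type*} {X : ι → Type*} [∀ i, Nonempty (X i)]
    (f : ∀ i, X i → EReal) (s : Finset ι) :
    ⨆ z : ∀ i, X i, ∑ i ∈ s, f i (z i) = ∑ i ∈ s, ⨆ v, f i v := by
  classical
  induction s using Finset.induction with
  | empty => simp
  | insert a s ha ih =>
    simp only [Finset.sum_insert ha, ← ih]
    refine le_antisymm (iSup_le fun z => add_le_add (le_iSup _ _)
      (le_iSup (fun z : ∀ i, X i => ∑ i ∈ s, f i (z i)) z)) ?_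
    refine iSup_add_iSup_le fun v z => le_iSup_of_le (Function.update z a v) ?_
    have hs : ∀ i ∈ s, Function.update z a v i = z i := fun i hi =>
      Function.update_of_ne (ne_of_mem_of_not_mem hi ha) v z
    rw [Function.update_self, Finset.sum_congr rfl fun i hi => congrArg (f i) (hs i hi)]

end EReal

section Conjugate

variable {K : Type*} [NormedAddCommGroup K] [InnerProductSpace ℝ K]

lemma iSup_weightedInner_sub_sum_eq_sum_fconj {ι : Type*} [Fintype ι] {G : ι → Type*}
    [∀ i, NormedAddCommGroup (G i)] [∀ i, InnerProductSpace ℝ (G i)] (w : ι → ℝ)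
    {h : ∀ i, G i → EReal} (hh : ∀ i x, h i x ≠ ⊥) (u : ∀ i, G i) :
    ⨆ z : ∀ i, G i, ((∑ i, w i * ⟪z i, u i⟫_ℝ : ℝ) : EReal) - ∑ i, h i (z i) =
      ∑ i, fconj (h i) (w i • u i) := by
  simp only [EReal.coe_finset_sum, ← real_inner_smul_right,
    EReal.finset_sum_sub_finset_sum _ _ _ fun i _ => hh i _]
  exact EReal.iSup_pi_finset_sum (fun i v => ((⟪v, w i • u i⟫_ℝ : ℝ) : EReal) - h i v) _

/-- The defining inequality of `prox_{cμφ}(c u)` tested at `c x`, multiplied by `c⁻¹`. -/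
lemma IsProx.inv_smul_le {c μ : ℝ} {φ : K → EReal} {u p : K} (hc : 0 < c)
    (hp : IsProx (c * μ) φ (c • u) p) (x : K) :
    (((1 / 2) * (c * ‖c⁻¹ • p - u‖ ^ 2) : ℝ) : EReal) + μ * φ p ≤
      (((1 / 2) * (c * ‖x - u‖ ^ 2) : ℝ) : EReal) + μ * φ (c • x) := by
  have hscale : ∀ (r : ℝ) (a : EReal),
      ((c⁻¹ : ℝ) : EReal) * (((r : ℝ) : EReal) + ((c * μ : ℝ) : EReal) * a) =
        ((c⁻¹ * r : ℝ) : EReal) + μ * a := by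
    intro r a
    rw [EReal.left_distrib_of_nonneg_of_ne_top (EReal.coe_nonneg.mpr (inv_pos.mpr hc).le)
      (EReal.coe_ne_top _), ← mul_assoc, ← EReal.coe_mul, ← EReal.coe_mul,
      inv_mul_cancel_left₀ hc.ne']
  have hnorm : ∀ v : K, ‖c • v - c • u‖ = c * ‖v - u‖ := fun v => by
    rw [← smul_sub, norm_smul, Real.norm_of_nonneg hc.le]
  have key := mul_le_mul_of_nonneg_left (hp (c • x))
    (EReal.coe_nonneg.mpr (inv_pos.mpr hc).le)
  have hnorm_p : ‖p - c • u‖ = c * ‖c⁻¹ • p - u‖ := by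
    rw [← hnorm, smul_inv_smul₀ hc.ne']
  rw [hscale, hscale, hnorm, hnorm_p] at key
  convert key using 3 <;> field_simp

end Conjugate

theorem prox_weighted_conj_split_general {m : ℕ} (G : Fin m → Type*)
    [∀ i, NormedAddCommGroup (G i)] [∀ i, InnerProductSpace ℝ (G i)]
    (w : Fin m → ℝ) (hw : ∀ i, w i ∈ Set.Ioo (0 : ℝ) 1)
    (h : ∀ i, G i → EReal) (hh : ∀ i, Gamma0 (h i))
    (hstar : (∀ i, G i) → EReal)
    (hhstar : ∀ y : ∀ i, G i,
      hstar y = ⨆ x : ∀ i, G i, ((∑ i, w i * ⟪x i, y i⟫_ℝ : ℝ) : EReal) - ∑ i, h i (x i))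
    (lam : ℝ) (hlam : 0 < lam)
    (y q : ∀ i, G i)
    (hq : ∀ i, IsProx (w i * lam) (fconj (h i)) (w i • y i) (q i)) :
    ∀ x : ∀ i, G i,
      (((1 / 2 : ℝ) * ∑ i, w i * ‖(w i)⁻¹ • q i - y i‖ ^ 2 : ℝ) : EReal)
          + (lam : EReal) * hstar (fun i => (w i)⁻¹ • q i) ≤
        (((1 / 2 : ℝ) * ∑ i, w i * ‖x i - y i‖ ^ 2 : ℝ) : EReal)
          + (lam : EReal) * hstar x := by
  intro x
  have hsplit : ∀ u, hstar u = ∑ i, fconj (h i) (w i • u i) := fun u =>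
    (hhstar u).trans (iSup_weightedInner_sub_sum_eq_sum_fconj w (fun i => (hh i).2.1) u)
  simp only [hsplit, smul_inv_smul₀ (hw _).1.ne', Finset.mul_sum, EReal.coe_finset_sum,
    EReal.coe_mul_finset_sum hlam.le, ← Finset.sum_add_distrib]
  exact Finset.sum_le_sum fun i _ => (hq i).inv_smul_le (hw i).1 (x i)

/-- Let `h(y) = Σᵢ hᵢ(yᵢ)` on `G = G₁ × ⋯ × G_m` and let `h*` be its Fenchel conjugate with
respect to the weighted inner product `⟨x,y⟩_{1,G} = Σᵢ wᵢ ⟨xᵢ,yᵢ⟩`.  Then for every `λ > 0`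
the proximity operator of `λ h*` with respect to the weighted norm `‖·‖_{1,G}` satisfies
`prox_{λh*}(y) = ((1/w₁) prox_{w₁λ h₁*}(w₁y₁), …, (1/w_m) prox_{w_mλ h_m*}(w_m y_m))`,
i.e. the tuple `p` with `pᵢ = (1/wᵢ) qᵢ`, where `qᵢ = prox_{wᵢλ hᵢ*}(wᵢ yᵢ)` (standard prox
on `Gᵢ`), minimizes `x ↦ (1/2)‖x - y‖²_{1,G} + λ h*(x)`. -/
theorem prox_weighted_conj_split {m : ℕ} (G : Fin m → Type*)
    [∀ i, NormedAddCommGroup (G i)] [∀ i, InnerProductSpace ℝ (G i)]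
    (w : Fin m → ℝ) (hw : ∀ i, w i ∈ Set.Ioo (0 : ℝ) 1) (hw1 : ∑ i, w i = 1)
    (h : ∀ i, G i → EReal) (hh : ∀ i, Gamma0 (h i))
    (hstar : (∀ i, G i) → EReal)
    (hhstar : ∀ y : ∀ i, G i,
      hstar y = ⨆ x : ∀ i, G i, ((∑ i, w i * ⟪x i, y i⟫_ℝ : ℝ) : EReal) - ∑ i, h i (x i))
    (lam : ℝ) (hlam : 0 < lam)
    (y q : ∀ i, G i)
    (hq : ∀ i, IsProx (w i * lam) (fconj (h i)) (w i • y i) (q i)) :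
    ∀ x : ∀ i, G i,
      (((1 / 2 : ℝ) * ∑ i, w i * ‖(w i)⁻¹ • q i - y i‖ ^ 2 : ℝ) : EReal)
          + (lam : EReal) * hstar (fun i => (w i)⁻¹ • q i) ≤
        (((1 / 2 : ℝ) * ∑ i, w i * ‖x i - y i‖ ^ 2 : ℝ) : EReal)
          + (lam : EReal) * hstar x :=
  prox_weighted_conj_split_general G w hw h hh hstar hhstar lam hlam y q hq
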